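/- arXiv:2605.07858 — 7 statements merged into one kernel-verified Lean document; each statement's English description precedes it below -/
import Mathlib

section
/- Given a linear-non-linear adjunction (F, m) ⊣ (U, n), the following data defines a category LS(C) (the linear simple category): objects are pairs (X, A) with X ∈ C and A ∈ L; morphisms (X, A) → (Y, B) are pairs (f, u) with f : X → Y in C and u : F(X) ⊗ A → B in L; composition of (f,u) and (g,v) is (f;g, (c_X ⊗ id_A); (F(f) ⊗ u); v); the identity on (X, A) is (id_X, w_X ⊗ id_A). In particular composition is associative and unital. -/
/-!
STATEMENT 2: Given a linear-non-linear adjunction `(F, m) ⊣ (U, n)`, the linear simple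
category `LS(C)` (objects pairs `(X, A)`, morphisms pairs `(f : X ⟶ Y, u : F X ⊗ A ⟶ B)`,
composition `(f,u);(g,v) = (f ≫ g, (c_X ⊗ id); (F f ⊗ u); v)`, identity
`(id, w_X ⊗ id)`) is a category: composition is associative and unital.
-/

open CategoryTheory MonoidalCategory CategoryTheory.CartesianMonoidalCategory

universe v u v' u'

variable {C : Type u} [Category.{v} C] [CartesianMonoidalCategory C]
  {L : Type u'} [Category.{v'} L] [MonoidalCategory L] [SymmetricCategory L]

/-- The diagonal morphism of the cartesian structure. -/
abbrev diag (X : C) : X ⟶ X ⊗ X := lift (𝟙 X) (𝟙 X)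

/-- Contraction on `F(X)`. -/
def con (F : C ⥤ L) [F.Monoidal] (X : C) : F.obj X ⟶ F.obj X ⊗ F.obj X :=
  F.map (diag X) ≫ Functor.OplaxMonoidal.δ F X X

/-- Weakening on `F(X)`. -/
def weak (F : C ⥤ L) [F.Monoidal] (X : C) : F.obj X ⟶ 𝟙_ L :=
  F.map (toUnit X) ≫ Functor.OplaxMonoidal.η F

variable (F : C ⥤ L) [F.Monoidal]

/-- Morphisms of the linear simple category `LS(C)`: a morphism `(X,A) ⟶ (Y,B)` is a
pair of `f : X ⟶ Y` in `C` and `u : F(X) ⊗ A ⟶ B` in `L`. -/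
structure LSHom (P Q : C × L) where
  base : P.1 ⟶ Q.1
  fib : F.obj P.1 ⊗ P.2 ⟶ Q.2

variable {F}

/-- Composition in the linear simple category. -/
def LSHom.comp {P Q R : C × L} (f : LSHom F P Q) (g : LSHom F Q R) : LSHom F P R where
  base := f.base ≫ g.base
  fib := (con F P.1 ▷ P.2) ≫ (α_ (F.obj P.1) (F.obj P.1) P.2).hom ≫
    (F.map f.base ⊗ₘ f.fib) ≫ g.fib

/-- Identities in the linear simple category. -/
def LSHom.id (P : C × L) : LSHom F P P where
  base := 𝟙 P.1
  fib := (weak F P.1 ▷ P.2) ≫ (λ_ P.2).hom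

set_option linter.unusedSectionVars false

/-! ### Auxiliary lemmas: the diagonal comonoid in `C`. -/

lemma diag_counit_left (X : C) : diag X ≫ (toUnit X ▷ X) ≫ (λ_ X).hom = 𝟙 X := by
  rw [← Category.assoc, ← Iso.eq_comp_inv]
  apply hom_ext <;> simp [toUnit_unique (𝟙 (𝟙_ C)) (toUnit _)]

lemma diag_counit_right (X : C) : diag X ≫ (X ◁ toUnit X) ≫ (ρ_ X).hom = 𝟙 X := by
  rw [← Category.assoc, ← Iso.eq_comp_inv]
  apply hom_ext <;> simp [toUnit_unique (𝟙 (𝟙_ C)) (toUnit _)]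

lemma diag_coassoc (X : C) :
    diag X ≫ (diag X ▷ X) ≫ (α_ X X X).hom = diag X ≫ (X ◁ diag X) := by
  apply hom_ext
  · simp
  · apply hom_ext <;> simp

lemma diag_natural {X Y : C} (f : X ⟶ Y) : f ≫ diag Y = diag X ≫ (f ⊗ₘ f) := by
  apply hom_ext <;> simp

/-! ### The comonoid `(F X, con F X, weak F X)` in `L`. -/

open Functor.OplaxMonoidal

lemma weak_natural {X Y : C} (f : X ⟶ Y) : F.map f ≫ weak F Y = weak F X := by
  rw [weak, weak, ← Category.assoc, ← F.map_comp, toUnit_unique (f ≫ toUnit Y) (toUnit X)]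

lemma con_natural {X Y : C} (f : X ⟶ Y) :
    F.map f ≫ con F Y = con F X ≫ (F.map f ⊗ₘ F.map f) := by
  rw [con, con, ← Category.assoc, ← F.map_comp, diag_natural, F.map_comp,
    Category.assoc, Category.assoc, δ_natural]

lemma con_counit_left (X : C) :
    con F X ≫ (weak F X ▷ F.obj X) ≫ (λ_ (F.obj X)).hom = 𝟙 (F.obj X) := by
  rw [con, weak, comp_whiskerRight, Category.assoc, Category.assoc,
    δ_natural_left_assoc, left_unitality_hom, ← F.map_comp, ← F.map_comp,
    diag_counit_left, F.map_id]

lemma con_counit_right (X : C) :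
    con F X ≫ (F.obj X ◁ weak F X) ≫ (ρ_ (F.obj X)).hom = 𝟙 (F.obj X) := by
  rw [con, weak, MonoidalCategory.whiskerLeft_comp, Category.assoc, Category.assoc,
    δ_natural_right_assoc, right_unitality_hom, ← F.map_comp, ← F.map_comp,
    diag_counit_right, F.map_id]

lemma con_coassoc (X : C) :
    con F X ≫ (con F X ▷ F.obj X) ≫ (α_ (F.obj X) (F.obj X) (F.obj X)).hom =
      con F X ≫ (F.obj X ◁ con F X) := by
  simp only [con, comp_whiskerRight, MonoidalCategory.whiskerLeft_comp, Category.assoc,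
    δ_natural_left_assoc, δ_natural_right_assoc]
  rw [associativity]
  simp only [← Functor.map_comp_assoc]
  rw [diag_coassoc]

/-! ### Abstract comonoid lemmas in `L` giving the category laws. -/

section Abstract

variable {Xp Xq Xr A B Dv E : L}

lemma ls_id_comp_fib (c : Xp ⟶ Xp ⊗ Xp) (e : Xp ⟶ 𝟙_ L)
    (hr : c ≫ (Xp ◁ e) ≫ (ρ_ Xp).hom = 𝟙 Xp) (u : Xp ⊗ A ⟶ B) :
    (c ▷ A) ≫ (α_ Xp Xp A).hom ≫ (𝟙 Xp ⊗ₘ ((e ▷ A) ≫ (λ_ A).hom)) ≫ u = u := by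
  calc (c ▷ A) ≫ (α_ Xp Xp A).hom ≫ (𝟙 Xp ⊗ₘ ((e ▷ A) ≫ (λ_ A).hom)) ≫ u
      = ((c ≫ (Xp ◁ e) ≫ (ρ_ Xp).hom) ▷ A) ≫ u := by monoidal
    _ = u := by rw [hr]; simp

lemma ls_comp_id_fib (c : Xp ⟶ Xp ⊗ Xp) (e : Xp ⟶ 𝟙_ L) (e' : Xq ⟶ 𝟙_ L)
    (a : Xp ⟶ Xq) (ha : a ≫ e' = e)
    (hl : c ≫ (e ▷ Xp) ≫ (λ_ Xp).hom = 𝟙 Xp) (u : Xp ⊗ A ⟶ B) :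
    (c ▷ A) ≫ (α_ Xp Xp A).hom ≫ (a ⊗ₘ u) ≫ (e' ▷ B) ≫ (λ_ B).hom = u := by
  rw [tensorHom_def' a u]
  simp only [Category.assoc]
  rw [← comp_whiskerRight_assoc, ha, whisker_exchange_assoc e u, leftUnitor_naturality]
  have key : (c ▷ A) ≫ (α_ Xp Xp A).hom ≫ (e ▷ (Xp ⊗ A)) ≫ (λ_ (Xp ⊗ A)).hom =
      (c ≫ (e ▷ Xp) ≫ (λ_ Xp).hom) ▷ A := by monoidal
  rw [reassoc_of% key, hl]
  simp

lemma ls_assoc_fib (c : Xp ⟶ Xp ⊗ Xp) (c' : Xq ⟶ Xq ⊗ Xq)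
    (a : Xp ⟶ Xq) (b : Xq ⟶ Xr)
    (hco : c ≫ (c ▷ Xp) ≫ (α_ Xp Xp Xp).hom = c ≫ (Xp ◁ c))
    (hnat : a ≫ c' = c ≫ (a ⊗ₘ a))
    (u : Xp ⊗ A ⟶ B) (v : Xq ⊗ B ⟶ Dv) (w : Xr ⊗ Dv ⟶ E) :
    (c ▷ A) ≫ (α_ Xp Xp A).hom ≫
      ((a ≫ b) ⊗ₘ ((c ▷ A) ≫ (α_ Xp Xp A).hom ≫ (a ⊗ₘ u) ≫ v)) ≫ w =
    (c ▷ A) ≫ (α_ Xp Xp A).hom ≫ (a ⊗ₘ u) ≫ (c' ▷ B) ≫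
      (α_ Xq Xq B).hom ≫ (b ⊗ₘ v) ≫ w := by
  have star : (c ▷ A) ≫ (α_ Xp Xp A).hom ≫ (Xp ◁ (c ▷ A)) ≫ (Xp ◁ (α_ Xp Xp A).hom) =
      (c ▷ A) ≫ (α_ Xp Xp A).hom ≫ (c ▷ (Xp ⊗ A)) ≫ (α_ Xp Xp (Xp ⊗ A)).hom := by
    calc (c ▷ A) ≫ (α_ Xp Xp A).hom ≫ (Xp ◁ (c ▷ A)) ≫ (Xp ◁ (α_ Xp Xp A).hom)
        = ((c ≫ (Xp ◁ c)) ▷ A) ≫ (α_ Xp (Xp ⊗ Xp) A).hom ≫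
            (Xp ◁ (α_ Xp Xp A).hom) := by monoidal
      _ = ((c ≫ (c ▷ Xp) ≫ (α_ Xp Xp Xp).hom) ▷ A) ≫ (α_ Xp (Xp ⊗ Xp) A).hom ≫
            (Xp ◁ (α_ Xp Xp A).hom) := by rw [hco]
      _ = (c ▷ A) ≫ (α_ Xp Xp A).hom ≫ (c ▷ (Xp ⊗ A)) ≫
            (α_ Xp Xp (Xp ⊗ A)).hom := by monoidal
  -- massage the right-hand side
  conv_rhs => rw [tensorHom_def' a u]
  simp only [Category.assoc]
  rw [← comp_whiskerRight_assoc a c' B, hnat, comp_whiskerRight c (a ⊗ₘ a) B,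
    Category.assoc, whisker_exchange_assoc c u, whisker_exchange_assoc (a ⊗ₘ a) u]
  -- massage the left-hand side
  conv_lhs => rw [tensorHom_def' (a ≫ b) ((c ▷ A) ≫ (α_ Xp Xp A).hom ≫ (a ⊗ₘ u) ≫ v)]
  simp only [MonoidalCategory.whiskerLeft_comp, Category.assoc]
  rw [reassoc_of% star, whisker_exchange_assoc (a ≫ b) v,
    comp_whiskerRight a b (Xq ⊗ B), Category.assoc,
    whisker_exchange_assoc a (a ⊗ₘ u), tensorHom_def a u, tensorHom_def a a,
    tensorHom_def b v]
  simp only [MonoidalCategory.whiskerLeft_comp, comp_whiskerRight, Category.assoc]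
  monoidal

end Abstract

lemma LSHom.ext' {P Q : C × L} {f g : LSHom F P Q}
    (h1 : f.base = g.base) (h2 : f.fib = g.fib) : f = g := by
  cases f; cases g; cases h1; cases h2; rfl

/-- in any linear-non-linear adjunction, the composition of the linear
simple category is associative and unital, so `LS(C)` is a category. -/
theorem LS_is_category (U : L ⥤ C) (adj : F ⊣ U) :
    (∀ (P Q R S : C × L) (f : LSHom F P Q) (g : LSHom F Q R) (h : LSHom F R S),
      (f.comp g).comp h = f.comp (g.comp h)) ∧
    (∀ (P Q : C × L) (f : LSHom F P Q), (LSHom.id P).comp f = f) ∧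
    (∀ (P Q : C × L) (f : LSHom F P Q), f.comp (LSHom.id Q) = f) := by
  refine ⟨fun P Q R S f g h => ?_, fun P Q f => ?_, fun P Q f => ?_⟩
  · refine LSHom.ext' (Category.assoc _ _ _) ?_
    simp only [LSHom.comp, F.map_comp, Category.assoc]
    exact ls_assoc_fib (con F P.1) (con F Q.1) (F.map f.base) (F.map g.base)
      (con_coassoc P.1) (con_natural f.base) f.fib g.fib h.fib
  · refine LSHom.ext' (Category.id_comp _) ?_
    simp only [LSHom.comp, LSHom.id, F.map_id, Category.assoc]
    exact ls_id_comp_fib (con F P.1) (weak F P.1) (con_counit_right P.1) f.fib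
  · refine LSHom.ext' (Category.comp_id _) ?_
    simp only [LSHom.comp, LSHom.id, Category.assoc]
    exact ls_comp_id_fib (con F P.1) (weak F P.1) (weak F Q.1) (F.map f.base)
      (weak_natural f.base) (con_counit_left P.1) f.fib
end

section
/- For any morphisms f : X → Y in C, u : A → B in L, U^S(f, w_X ⊗ u) = (f, π_2; U(u)), where π_2 : X × U(A) → U(A) is the projection. -/
/-!
STATEMENT 7: For any morphisms `f : X ⟶ Y` in `C` and `u : A ⟶ B` in `L`,
`U^S(f, w_X ⊗ u) = (f, π₂ ≫ U(u))`, where `π₂ : X × U(A) ⟶ U(A)` is the projection.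
-/

open CategoryTheory MonoidalCategory CategoryTheory.CartesianMonoidalCategory

universe v u v' u'

variable {C : Type u} [Category.{v} C] [CartesianMonoidalCategory C]
  {L : Type u'} [Category.{v'} L] [MonoidalCategory L] [SymmetricCategory L]

variable (F : C ⥤ L) [F.Monoidal]

variable {F}

/-- The chosen cartesian lift of `f : X ⟶ Y` at `(Y, B)`, namely `(f, w_X ⊗ id_B)`. -/
def LSlift {X Y : C} (f : X ⟶ Y) (B : L) : LSHom F ((X, B) : C × L) (Y, B) where
  base := f
  fib := (weak F X ▷ B) ≫ (λ_ B).hom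

/-- Morphisms of the simple category `S(C)`: a morphism `(X,J) ⟶ (Y,K)` is a pair of
`f : X ⟶ Y` and `u : X × J ⟶ K`. -/
structure SHom (P Q : C × C) where
  base : P.1 ⟶ Q.1
  fib : P.1 ⊗ P.2 ⟶ Q.2

/-- Composition in the simple category, using the diagonal. -/
def SHom.comp {P Q R : C × C} (f : SHom P Q) (g : SHom Q R) : SHom P R where
  base := f.base ≫ g.base
  fib := (diag P.1 ▷ P.2) ≫ (α_ P.1 P.1 P.2).hom ≫ (f.base ⊗ₘ f.fib) ≫ g.fib

/-- Identities in the simple category: `(id_X, π_J)`. -/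
def SHom.id (P : C × C) : SHom P P where
  base := 𝟙 P.1
  fib := snd P.1 P.2

/-- The chosen cartesian lift `(f, π_K)` of the simple fibration. -/
def Slift {X Y : C} (f : X ⟶ Y) (J : C) : SHom ((X, J) : C × C) (Y, J) where
  base := f
  fib := snd X J

/-- The lax monoidal structure `n` on `U` obtained from the strong monoidal structure
on `F` by lax–colax duality. -/
def nMap (F : C ⥤ L) [F.Monoidal] (U : L ⥤ C) (adj : F ⊣ U) (A B : L) :
    U.obj A ⊗ U.obj B ⟶ U.obj (A ⊗ B) :=
  adj.unit.app (U.obj A ⊗ U.obj B) ≫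
    U.map (Functor.OplaxMonoidal.δ F (U.obj A) (U.obj B) ≫
      (adj.counit.app A ⊗ₘ adj.counit.app B))

/-- `U^S` on objects: `(X, A) ↦ (X, U A)`. -/
def USobj (U : L ⥤ C) (P : C × L) : C × C := (P.1, U.obj P.2)

/-- `U^S` on morphisms: `(f, u) ↦ (f, (η_X × id) ≫ n ≫ U(u))`. -/
def USmap (U : L ⥤ C) (adj : F ⊣ U) {P Q : C × L} (k : LSHom F P Q) :
    SHom (USobj U P) (USobj U Q) where
  base := k.base
  fib := (adj.unit.app P.1 ⊗ₘ 𝟙 (U.obj P.2)) ≫ nMap F U adj (F.obj P.1) P.2 ≫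
    U.map k.fib

/-- `U^S(f, w_X ⊗ u) = (f, π₂ ≫ U(u))`. -/
theorem US_weak (U : L ⥤ C) (adj : F ⊣ U) {X Y : C} {A B : L}
    (f : X ⟶ Y) (u : A ⟶ B) :
    USmap U adj (⟨f, (weak F X ⊗ₘ u) ≫ (λ_ B).hom⟩ : LSHom F (X, A) (Y, B)) =
      (⟨f, snd X (U.obj A) ≫ U.map u⟩ :
        SHom (USobj U ((X, A) : C × L)) (USobj U ((Y, B) : C × L))) := by
  have hsnd : (λ_ (U.obj A)).hom = snd (𝟙_ C) (U.obj A) := by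
    rw [← cancel_epi (λ_ (U.obj A)).inv, leftUnitor_inv_snd, Iso.inv_hom_id]
  simp only [USmap, USobj, nMap, Category.assoc]
  congr 1
  have key : F.map (adj.unit.app X ⊗ₘ 𝟙 (U.obj A)) ≫
      Functor.OplaxMonoidal.δ F (U.obj (F.obj X)) (U.obj A) ≫
      (adj.counit.app (F.obj X) ⊗ₘ adj.counit.app A) ≫
      (weak F X ⊗ₘ u) ≫ (λ_ B).hom =
      F.map (snd X (U.obj A)) ≫ adj.counit.app A ≫ u := by
    have h1 := Functor.OplaxMonoidal.δ_natural (F := F) (adj.unit.app X)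
      (𝟙 (U.obj A))
    rw [← reassoc_of% h1, F.map_id, tensorHom_comp_tensorHom_assoc, tensorHom_comp_tensorHom_assoc,
      adj.left_triangle_components, Category.id_comp, Category.id_comp]
    rw [weak, MonoidalCategory.tensorHom_def, Category.assoc,
      MonoidalCategory.leftUnitor_naturality, comp_whiskerRight,
      Category.assoc, Functor.OplaxMonoidal.δ_natural_left_assoc,
      Functor.OplaxMonoidal.left_unitality_hom_assoc, ← F.map_comp_assoc,
      hsnd, whiskerRight_snd]
  have h2 := adj.unit_naturality (adj.unit.app X ⊗ₘ 𝟙 (U.obj A))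
  have h3 := adj.unit_naturality (snd X (U.obj A))
  calc (adj.unit.app X ⊗ₘ 𝟙 (U.obj A)) ≫ adj.unit.app (U.obj (F.obj X) ⊗ U.obj A) ≫
        U.map (Functor.OplaxMonoidal.δ F (U.obj (F.obj X)) (U.obj A) ≫
          (adj.counit.app (F.obj X) ⊗ₘ adj.counit.app A)) ≫
        U.map ((weak F X ⊗ₘ u) ≫ (λ_ B).hom)
      = adj.unit.app (X ⊗ U.obj A) ≫
        U.map (F.map (adj.unit.app X ⊗ₘ 𝟙 (U.obj A)) ≫
          Functor.OplaxMonoidal.δ F (U.obj (F.obj X)) (U.obj A) ≫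
          (adj.counit.app (F.obj X) ⊗ₘ adj.counit.app A) ≫
          (weak F X ⊗ₘ u) ≫ (λ_ B).hom) := by
        simp only [U.map_comp, Category.assoc]
        rw [reassoc_of% h2]
    _ = adj.unit.app (X ⊗ U.obj A) ≫
        U.map (F.map (snd X (U.obj A)) ≫ adj.counit.app A ≫ u) := by rw [key]
    _ = snd X (U.obj A) ≫ U.map u := by
        simp only [U.map_comp, Category.assoc]
        rw [reassoc_of% h3, adj.right_triangle_components_assoc]
end

section
/- The assignment F^S(X, J) = (X, F J) and F^S(f, u) = (f, m_{X,J}; F(u)) defines a functor F^S : S(C) → LS(C), and F^S is a split fibred functor from the simple fibration s to ls. -/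
/-!
STATEMENT 8: The assignment `F^S(X, J) = (X, F J)`, `F^S(f, u) = (f, m_{X,J} ≫ F(u))`
defines a functor `F^S : S(C) → LS(C)`, and `F^S` is a split fibred functor from the
simple fibration `s` to `ls`.
-/

open CategoryTheory MonoidalCategory CategoryTheory.CartesianMonoidalCategory

universe v u v' u'

variable {C : Type u} [Category.{v} C] [CartesianMonoidalCategory C]
  {L : Type u'} [Category.{v'} L] [MonoidalCategory L] [SymmetricCategory L]

variable (F : C ⥤ L) [F.Monoidal]

variable {F}

/-- `F^S` on objects: `(X, J) ↦ (X, F J)`. -/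
def FSobj (F : C ⥤ L) (P : C × C) : C × L := (P.1, F.obj P.2)

/-- `F^S` on morphisms: `(f, u) ↦ (f, m_{X,J} ≫ F(u))`. -/
def FSmap [F.Monoidal] {P Q : C × C} (k : SHom P Q) :
    LSHom F (FSobj F P) (FSobj F Q) where
  base := k.base
  fib := Functor.LaxMonoidal.μ F P.1 P.2 ≫ F.map k.fib

set_option linter.unusedSectionVars false in
lemma snd_eq (X J : C) : snd X J = (toUnit X ▷ J) ≫ (λ_ J).hom := by
  have : (λ_ J).hom = snd (𝟙_ C) J := by
    rw [← cancel_epi (λ_ J).inv, leftUnitor_inv_snd, Iso.inv_hom_id]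
  rw [this, whiskerRight_snd]

set_option linter.unusedSectionVars false in
lemma mu_snd (X J : C) :
    Functor.LaxMonoidal.μ F X J ≫ F.map (snd X J) =
      (weak F X ▷ F.obj J) ≫ (λ_ (F.obj J)).hom := by
  rw [snd_eq, F.map_comp, weak, comp_whiskerRight, Category.assoc,
    Functor.LaxMonoidal.left_unitality, ← Functor.LaxMonoidal.μ_natural_left_assoc]
  simp

/-- `F^S` is a functor and a split fibred functor from `s` to `ls`:
it preserves identities, composition, lies over the identity on `C`, and preserves the
chosen cartesian lifts. -/
theorem FS_split_fibred_functor (U : L ⥤ C) (adj : F ⊣ U) :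
    (∀ P : C × C, FSmap (F := F) (SHom.id P) = LSHom.id (FSobj F P)) ∧
    (∀ (P Q R : C × C) (f : SHom P Q) (g : SHom Q R),
      FSmap (F := F) (f.comp g) = (FSmap f).comp (FSmap g)) ∧
    (∀ (P Q : C × C) (f : SHom P Q), (FSmap (F := F) f).base = f.base ∧
      (FSobj F P).1 = P.1) ∧
    (∀ (X Y : C) (f : X ⟶ Y) (J : C),
      FSmap (F := F) (Slift f J) = LSlift f (F.obj J)) := by
  refine ⟨fun P => ?_, fun P Q R f g => ?_, fun P Q f => ⟨rfl, rfl⟩, fun X Y f J => ?_⟩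
  · unfold FSmap SHom.id LSHom.id
    congr 1
    exact mu_snd P.1 P.2
  · unfold FSmap SHom.comp LSHom.comp con
    congr 1
    simp only [MonoidalCategory.tensorHom_def, F.map_comp, comp_whiskerRight, Category.assoc,
      ← Functor.LaxMonoidal.μ_natural_left_assoc,
      ← Functor.LaxMonoidal.μ_natural_right_assoc]
    simp only [FSobj, MonoidalCategory.whiskerLeft_comp, Category.assoc]
    rw [← whisker_exchange_assoc, Functor.LaxMonoidal.μ_natural_right_assoc,
      Functor.LaxMonoidal.μ_natural_left_assoc,
      ← Functor.LaxMonoidal.associativity_assoc]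
    simp
  · unfold FSmap Slift LSlift
    congr 1
    exact mu_snd X J
end

section
/- In the linear simple fibration of a linear-non-linear adjunction, the comultiplication and counit of the comonad Σ_{(X,J)} π_1* on LS(C)_X coincide with contraction and weakening: the comultiplication δ_{(X,A)} : (X, F(J) ⊗ A) → (X, F(J) ⊗ F(J) ⊗ A) equals c^X_J ⊗_X id_{(X,A)}, and the counit μ_{(X,A)} : (X, F(J) ⊗ A) → (X, A) equals w^X_J ⊗_X id_{(X,A)}. -/
/-!
STATEMENT 13: In the linear simple fibration of a linear-non-linear adjunction, the
comultiplication and counit of the comonad `Σ_{(X,J)} π₁*` on `LS(C)_X` coincide with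
contraction and weakening: the comultiplication
`δ_{(X,A)} : (X, F(J) ⊗ A) ⟶ (X, F(J) ⊗ F(J) ⊗ A)` equals `c^X_J ⊗_X id_{(X,A)}`,
and the counit `μ_{(X,A)} : (X, F(J) ⊗ A) ⟶ (X, A)` equals `w^X_J ⊗_X id_{(X,A)}`.
-/

open CategoryTheory MonoidalCategory CategoryTheory.CartesianMonoidalCategory

universe v u v' u'

variable {C : Type u} [Category.{v} C] [CartesianMonoidalCategory C]
  {L : Type u'} [Category.{v'} L] [MonoidalCategory L] [SymmetricCategory L]

variable (F : C ⥤ L) [F.Monoidal]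

variable {F}

/-- The identity vertical morphism over `X` in `LS(C)`. -/
def vid (X : C) (A : L) : F.obj X ⊗ A ⟶ A :=
  (weak F X ▷ A) ≫ (λ_ A).hom

/-- Composition of vertical morphisms over `X` in `LS(C)`. -/
def vcomp {X : C} {A B D : L} (u : F.obj X ⊗ A ⟶ B) (v : F.obj X ⊗ B ⟶ D) :
    F.obj X ⊗ A ⟶ D :=
  (con F X ▷ A) ≫ (α_ (F.obj X) (F.obj X) A).hom ≫ (F.obj X ◁ u) ≫ v

/-- The linear dependent sum `Σ_{(X,J)}` on vertical morphisms: it sends a vertical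
morphism `u : (X×J, A) ⟶ (X×J, B)` to the vertical morphism
`(id_X, (id ⊗ c_J ⊗ id) ≫ (σ_{F X, F J} ⊗ id) ≫ (id_{F J} ⊗ (m_{X,J} ⊗ id ≫ u)))`
from `(X, F(J) ⊗ A)` to `(X, F(J) ⊗ B)`. -/
def sigmaMap (X J : C) {A B : L} (u : F.obj (X ⊗ J) ⊗ A ⟶ B) :
    F.obj X ⊗ (F.obj J ⊗ A) ⟶ F.obj J ⊗ B :=
  (F.obj X ◁ (con F J ▷ A)) ≫ (F.obj X ◁ (α_ (F.obj J) (F.obj J) A).hom) ≫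
    (α_ (F.obj X) (F.obj J) (F.obj J ⊗ A)).inv ≫
    ((β_ (F.obj X) (F.obj J)).hom ▷ (F.obj J ⊗ A)) ≫
    (α_ (F.obj J) (F.obj X) (F.obj J ⊗ A)).hom ≫
    (F.obj J ◁ ((α_ (F.obj X) (F.obj J) A).inv ≫
      (Functor.LaxMonoidal.μ F X J ▷ A) ≫ u))

/-- The reindexing functor `π₁*` along the projection, on vertical morphisms. -/
def piStar (X J : C) {A B : L} (v : F.obj X ⊗ A ⟶ B) :
    F.obj (X ⊗ J) ⊗ A ⟶ B :=
  (F.map (fst X J) ▷ A) ≫ v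

/-- The unit `ν` of `Σ_{(X,J)} ⊣ π₁*`:
`(id, (m⁻¹ ⊗ id) ≫ (w_X ⊗ id)) : (X×J, A) ⟶ (X×J, F(J) ⊗ A)`. -/
def nuSigma (X J : C) (A : L) : F.obj (X ⊗ J) ⊗ A ⟶ F.obj J ⊗ A :=
  (Functor.OplaxMonoidal.δ F X J ▷ A) ≫
    (α_ (F.obj X) (F.obj J) A).hom ≫
    (weak F X ▷ (F.obj J ⊗ A)) ≫ (λ_ (F.obj J ⊗ A)).hom

/-- The counit `μ` of `Σ_{(X,J)} ⊣ π₁*`: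
`(id_X, w_X ⊗ w_J ⊗ id) : (X, F(J) ⊗ A) ⟶ (X, A)`. -/
def muSigma (X J : C) (A : L) : F.obj X ⊗ (F.obj J ⊗ A) ⟶ A :=
  (F.obj X ◁ ((weak F J ▷ A) ≫ (λ_ A).hom)) ≫ (weak F X ▷ A) ≫ (λ_ A).hom

/-- The fibrewise tensor product of vertical morphisms over `X`. -/
def vtensor {X : C} {A A' B B' : L} (u : F.obj X ⊗ A ⟶ A') (v : F.obj X ⊗ B ⟶ B') :
    F.obj X ⊗ (A ⊗ B) ⟶ A' ⊗ B' :=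
  (con F X ▷ (A ⊗ B)) ≫ tensorμ (F.obj X) (F.obj X) A B ≫ (u ⊗ₘ v)

/-- The fibred contraction `c^X_J = (id_X, w_X ⊗ c_J) : F^S(X,J) ⟶ F^S(X,J) ⊗ F^S(X,J)`
(its fibre component). -/
def fibCon (X J : C) : F.obj X ⊗ F.obj J ⟶ F.obj J ⊗ F.obj J :=
  (weak F X ⊗ₘ con F J) ≫ (λ_ (F.obj J ⊗ F.obj J)).hom

/-- The fibred weakening `w^X_J = (id_X, w_X ⊗ w_J) : F^S(X,J) ⟶ 1^X`
(its fibre component). -/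
def fibWeak (X J : C) : F.obj X ⊗ F.obj J ⟶ 𝟙_ L :=
  (weak F X ⊗ₘ weak F J) ≫ (λ_ (𝟙_ L)).hom


section Aux

lemma aux_diag_weak_left (X : C) : diag X ≫ (toUnit X ▷ X) = (λ_ X).inv := by
  ext <;> simp

omit [SymmetricCategory L] in
lemma aux_con_weak_left (X : C) :
    con F X ≫ (weak F X ▷ F.obj X) = (λ_ (F.obj X)).inv := by
  simp only [con, weak, comp_whiskerRight, Category.assoc,
    Functor.OplaxMonoidal.δ_natural_left_assoc]
  rw [← Functor.map_comp_assoc, aux_diag_weak_left]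
  rw [← Functor.OplaxMonoidal.left_unitality]

lemma aux_core1 {L : Type u'} [Category.{v'} L] [MonoidalCategory L] [SymmetricCategory L]
    (P Q A : L) (c : P ⟶ P ⊗ P) (cQ : Q ⟶ Q ⊗ Q) (eP : P ⟶ 𝟙_ L)
    (h1 : c ≫ (eP ▷ P) = (λ_ P).inv) :
    (P ◁ (cQ ▷ A)) ≫ (P ◁ (α_ Q Q A).hom) ≫ (α_ P Q (Q ⊗ A)).inv ≫
      ((β_ P Q).hom ▷ (Q ⊗ A)) ≫ (α_ Q P (Q ⊗ A)).hom ≫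
      (Q ◁ ((eP ▷ (Q ⊗ A)) ≫ (λ_ (Q ⊗ A)).hom))
    = (c ▷ (Q ⊗ A)) ≫ tensorμ P P Q A ≫
      (((eP ⊗ₘ cQ) ≫ (λ_ (Q ⊗ Q)).hom) ⊗ₘ ((eP ▷ A) ≫ (λ_ A).hom)) ≫
      (α_ Q Q A).hom := by
  simp only [tensorμ, MonoidalCategory.tensorHom_def, comp_whiskerRight, Category.assoc]
  rw [← associator_inv_naturality_left_assoc eP Q (P ⊗ A)]
  rw [whisker_exchange_assoc eP (α_ Q P A).hom]
  rw [whisker_exchange_assoc eP ((β_ P Q).hom ▷ A)]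
  rw [whisker_exchange_assoc eP (α_ P Q A).inv]
  rw [← associator_naturality_left_assoc eP P (Q ⊗ A)]
  rw [← comp_whiskerRight_assoc, h1]
  simp only [whisker_exchange, MonoidalCategory.whiskerLeft_comp, Category.assoc,
    whiskerLeft_rightUnitor, leftUnitor_whiskerRight]
  simp
  rw [← comp_whiskerRight_assoc (β_ P Q).hom (cQ ▷ P), ← BraidedCategory.braiding_naturality_right,
    comp_whiskerRight, Category.assoc, ← associator_inv_naturality_middle_assoc]
  congr 1
  simp [whisker_exchange]
  congr 1
  congr 1
  congr 1
  congr 1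
  simp only [← MonoidalCategory.whiskerLeft_comp]
  congr 1
  rw [MonoidalCategory.whiskerLeft_comp, ← associator_naturality_middle_assoc,
    ← comp_whiskerRight_assoc, ← BraidedCategory.braiding_naturality_left]
  simp

lemma aux_core2 {L : Type u'} [Category.{v'} L] [MonoidalCategory L] [SymmetricCategory L]
    (P Q A : L) (c : P ⟶ P ⊗ P) (eP : P ⟶ 𝟙_ L) (eQ : Q ⟶ 𝟙_ L)
    (h1 : c ≫ (eP ▷ P) = (λ_ P).inv) :
    (P ◁ (eQ ▷ A)) ≫ (P ◁ (λ_ A).hom) ≫ (eP ▷ A) ≫ (λ_ A).hom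
    = (c ▷ (Q ⊗ A)) ≫ tensorμ P P Q A ≫
      (((eP ⊗ₘ eQ) ≫ (λ_ (𝟙_ L)).hom) ⊗ₘ ((eP ▷ A) ≫ (λ_ A).hom)) ≫ (λ_ A).hom := by
  simp only [tensorμ, MonoidalCategory.tensorHom_def, comp_whiskerRight, Category.assoc]
  rw [← associator_inv_naturality_left_assoc eP Q (P ⊗ A)]
  rw [whisker_exchange_assoc eP (α_ Q P A).hom]
  rw [whisker_exchange_assoc eP ((β_ P Q).hom ▷ A)]
  rw [whisker_exchange_assoc eP (α_ P Q A).inv]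
  rw [← associator_naturality_left_assoc eP P (Q ⊗ A)]
  rw [← comp_whiskerRight_assoc, h1]
  simp only [whisker_exchange, MonoidalCategory.whiskerLeft_comp, Category.assoc,
    whiskerLeft_rightUnitor, leftUnitor_whiskerRight]
  simp
  rw [← comp_whiskerRight_assoc (β_ P Q).hom (eQ ▷ P), ← BraidedCategory.braiding_naturality_right]
  simp

end Aux

/-- the comultiplication `Σ(ν)` of the comonad `Σ_{(X,J)} π₁*` is
`c^X_J ⊗_X id_{(X,A)}` and its counit `μ` is `w^X_J ⊗_X id_{(X,A)}`. -/
theorem sigma_comonad_con_weak (U : L ⥤ C) (adj : F ⊣ U) (X J : C) (A : L) :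
    sigmaMap (F := F) X J (nuSigma X J A) =
      vtensor (fibCon X J) (vid X A) ≫ (α_ (F.obj J) (F.obj J) A).hom ∧
    muSigma (F := F) X J A = vtensor (fibWeak X J) (vid X A) ≫ (λ_ A).hom := by
  constructor
  · have := aux_core1 (F.obj X) (F.obj J) A (con F X) (con F J) (weak F X)
      (aux_con_weak_left (F := F) X)
    simp only [sigmaMap, nuSigma, vtensor, vid, fibCon, Category.assoc] at this ⊢
    rw [← this]
    simp only [Functor.Monoidal.whiskerRight_μ_δ_assoc]
    simp [Functor.Monoidal.whiskerRight_μ_δ_assoc, MonoidalCategory.whiskerLeft_comp]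
  · have := aux_core2 (F.obj X) (F.obj J) A (con F X) (weak F X) (weak F J)
      (aux_con_weak_left (F := F) X)
    simp only [muSigma, vtensor, vid, fibWeak, Category.assoc] at this ⊢
    rw [← this]
    simp [MonoidalCategory.whiskerLeft_comp]
end

section
/- In a differential Seely category, the composite of the deriving transform with the Seely isomorphism satisfies the Leibniz-type identity ∂_{A⊕B}; s_{A,B} = [s_{A,B} ⊗ π_2; (id_{!A} ⊗ ∂_B)] + [s_{A,B} ⊗ π_1; (id_{!A} ⊗ σ_{!B, A}); (∂_A ⊗ id_{!B})] as morphisms !(A ⊕ B) ⊗ (A ⊕ B) → !A ⊗ !B. -/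
/-!
STATEMENT 16: In a differential Seely category, the composite of the deriving
transform with the Seely isomorphism satisfies the Leibniz-type identity
`∂_{A⊕B} ≫ s_{A,B} = [s_{A,B} ⊗ π₂ ≫ (id_{!A} ⊗ ∂_B)] +
[s_{A,B} ⊗ π₁ ≫ (id_{!A} ⊗ σ_{!B,A}) ≫ (∂_A ⊗ id_{!B})]`
as morphisms `!(A ⊕ B) ⊗ (A ⊕ B) ⟶ !A ⊗ !B`.
-/

open CategoryTheory MonoidalCategory

universe v u

/-- A differential Seely category structure on a symmetric monoidal category `L`:
an additive (commutative-monoid–enriched) symmetric monoidal category with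
biproducts, an exponential comonad `!` whose objects carry natural cocommutative
comonoid structures (contraction and weakening), invertible Seely comparisons, and a
deriving transform `∂_A : !A ⊗ A ⟶ !A` satisfying the constant, Leibniz, linear,
chain and interchange rules. -/
structure DSC (L : Type u) [Category.{v} L] [MonoidalCategory L] [SymmetricCategory L]
    [∀ X Y : L, AddCommMonoid (X ⟶ Y)] where
  /- additive structure: composition and tensor are bi-additive -/
  add_comp : ∀ {X Y Z : L} (f g : X ⟶ Y) (h : Y ⟶ Z), (f + g) ≫ h = f ≫ h + g ≫ h
  comp_add : ∀ {X Y Z : L} (f : X ⟶ Y) (g h : Y ⟶ Z), f ≫ (g + h) = f ≫ g + f ≫ h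
  zero_comp' : ∀ {X Y Z : L} (h : Y ⟶ Z), (0 : X ⟶ Y) ≫ h = 0
  comp_zero' : ∀ {X Y Z : L} (f : X ⟶ Y), f ≫ (0 : Y ⟶ Z) = 0
  whiskerLeft_add : ∀ (X : L) {Y Z : L} (f g : Y ⟶ Z), X ◁ (f + g) = X ◁ f + X ◁ g
  whiskerRight_add : ∀ {Y Z : L} (f g : Y ⟶ Z) (X : L), (f + g) ▷ X = f ▷ X + g ▷ X
  whiskerLeft_zero : ∀ (X Y Z : L), X ◁ (0 : Y ⟶ Z) = 0
  whiskerRight_zero : ∀ (X Y Z : L), (0 : Y ⟶ Z) ▷ X = 0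
  /- biproducts -/
  biprod : L → L → L
  pr1 : ∀ A B, biprod A B ⟶ A
  pr2 : ∀ A B, biprod A B ⟶ B
  in1 : ∀ A B, A ⟶ biprod A B
  in2 : ∀ A B, B ⟶ biprod A B
  in1_pr1 : ∀ A B, in1 A B ≫ pr1 A B = 𝟙 A
  in2_pr2 : ∀ A B, in2 A B ≫ pr2 A B = 𝟙 B
  in1_pr2 : ∀ A B, in1 A B ≫ pr2 A B = 0
  in2_pr1 : ∀ A B, in2 A B ≫ pr1 A B = 0
  biprod_total : ∀ A B, pr1 A B ≫ in1 A B + pr2 A B ≫ in2 A B = 𝟙 (biprod A B)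
  /- a terminal object (the additive unit of the biproduct) -/
  term : L
  toTerm : ∀ A : L, A ⟶ term
  toTerm_unique : ∀ (A : L) (f : A ⟶ term), f = toTerm A
  /- the exponential comonad -/
  bang : L ⥤ L
  der : ∀ A : L, bang.obj A ⟶ A
  der_natural : ∀ {A B : L} (f : A ⟶ B), bang.map f ≫ der B = der A ≫ f
  dig : ∀ A : L, bang.obj A ⟶ bang.obj (bang.obj A)
  dig_natural : ∀ {A B : L} (f : A ⟶ B),
    bang.map f ≫ dig B = dig A ≫ bang.map (bang.map f)
  dig_der : ∀ A : L, dig A ≫ der (bang.obj A) = 𝟙 (bang.obj A)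
  dig_bang_der : ∀ A : L, dig A ≫ bang.map (der A) = 𝟙 (bang.obj A)
  dig_dig : ∀ A : L, dig A ≫ dig (bang.obj A) = dig A ≫ bang.map (dig A)
  /- contraction and weakening: natural cocommutative comonoid structures on `!A` -/
  conn : ∀ A : L, bang.obj A ⟶ bang.obj A ⊗ bang.obj A
  weakn : ∀ A : L, bang.obj A ⟶ 𝟙_ L
  conn_natural : ∀ {A B : L} (f : A ⟶ B),
    bang.map f ≫ conn B = conn A ≫ (bang.map f ⊗ₘ bang.map f)
  weakn_natural : ∀ {A B : L} (f : A ⟶ B), bang.map f ≫ weakn B = weakn A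
  conn_coassoc : ∀ A : L,
    conn A ≫ (conn A ▷ bang.obj A) ≫
        (α_ (bang.obj A) (bang.obj A) (bang.obj A)).hom =
      conn A ≫ (bang.obj A ◁ conn A)
  conn_counit : ∀ A : L,
    conn A ≫ (weakn A ▷ bang.obj A) ≫ (λ_ (bang.obj A)).hom = 𝟙 (bang.obj A)
  conn_cocomm : ∀ A : L, conn A ≫ (β_ (bang.obj A) (bang.obj A)).hom = conn A
  /- the Seely comparisons are invertible -/
  seelyInv : ∀ A B : L, bang.obj A ⊗ bang.obj B ⟶ bang.obj (biprod A B)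
  seely_hom_inv : ∀ A B : L,
    (conn (biprod A B) ≫ (bang.map (pr1 A B) ⊗ₘ bang.map (pr2 A B))) ≫ seelyInv A B =
      𝟙 (bang.obj (biprod A B))
  seely_inv_hom : ∀ A B : L,
    seelyInv A B ≫ (conn (biprod A B) ≫ (bang.map (pr1 A B) ⊗ₘ bang.map (pr2 A B))) =
      𝟙 (bang.obj A ⊗ bang.obj B)
  seelyUnitInv : 𝟙_ L ⟶ bang.obj term
  seelyUnit_hom_inv : weakn term ≫ seelyUnitInv = 𝟙 (bang.obj term)
  seelyUnit_inv_hom : seelyUnitInv ≫ weakn term = 𝟙 (𝟙_ L)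
  /- the deriving transform -/
  deriv : ∀ A : L, bang.obj A ⊗ A ⟶ bang.obj A
  deriv_natural : ∀ {A B : L} (f : A ⟶ B),
    (bang.map f ⊗ₘ f) ≫ deriv B = deriv A ≫ bang.map f
  /- d.1 constant rule -/
  deriv_weakn : ∀ A : L, deriv A ≫ weakn A = 0
  /- d.2 Leibniz rule -/
  deriv_conn : ∀ A : L,
    deriv A ≫ conn A =
      (conn A ▷ A) ≫ (α_ (bang.obj A) (bang.obj A) A).hom ≫
          (bang.obj A ◁ deriv A) +
        (conn A ▷ A) ≫ (α_ (bang.obj A) (bang.obj A) A).hom ≫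
          (bang.obj A ◁ (β_ (bang.obj A) A).hom) ≫
          (α_ (bang.obj A) A (bang.obj A)).inv ≫ (deriv A ▷ bang.obj A)
  /- d.3 linear rule -/
  deriv_der : ∀ A : L, deriv A ≫ der A = (weakn A ▷ A) ≫ (λ_ A).hom
  /- d.4 chain rule -/
  deriv_dig : ∀ A : L,
    deriv A ≫ dig A =
      (conn A ▷ A) ≫ (α_ (bang.obj A) (bang.obj A) A).hom ≫
        (dig A ⊗ₘ deriv A) ≫ deriv (bang.obj A)
  /- d.5 interchange rule -/
  deriv_interchange : ∀ A : L,
    (bang.obj A ◁ (β_ A A).hom) ≫ (α_ (bang.obj A) A A).inv ≫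
        (deriv A ▷ A) ≫ deriv A =
      (α_ (bang.obj A) A A).inv ≫ (deriv A ▷ A) ≫ deriv A

namespace DSC

variable {L : Type u} [Category.{v} L] [MonoidalCategory L] [SymmetricCategory L]
  [∀ X Y : L, AddCommMonoid (X ⟶ Y)] (D : DSC L)

/-- The Seely comparison `s_{A,B} = c_{A⊕B} ≫ (!π₁ ⊗ !π₂)`. -/
def seely (A B : L) : D.bang.obj (D.biprod A B) ⟶ D.bang.obj A ⊗ D.bang.obj B :=
  D.conn (D.biprod A B) ≫ (D.bang.map (D.pr1 A B) ⊗ₘ D.bang.map (D.pr2 A B))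

/-- Pairing into the biproduct. -/
def blift {X A B : L} (f : X ⟶ A) (g : X ⟶ B) : X ⟶ D.biprod A B :=
  f ≫ D.in1 A B + g ≫ D.in2 A B

/-- Functorial action of the biproduct. -/
def bmap {A A' B B' : L} (f : A ⟶ A') (g : B ⟶ B') : D.biprod A B ⟶ D.biprod A' B' :=
  D.pr1 A B ≫ f ≫ D.in1 A' B' + D.pr2 A B ≫ g ≫ D.in2 A' B'

end DSC

/-- the Leibniz-type identity for the differential of the Seely
isomorphism. -/
theorem DSC.deriv_seely {L : Type u} [Category.{v} L] [MonoidalCategory L]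
    [SymmetricCategory L] [∀ X Y : L, AddCommMonoid (X ⟶ Y)] (D : DSC L) (A B : L) :
    D.deriv (D.biprod A B) ≫ D.seely A B =
      (D.seely A B ⊗ₘ D.pr2 A B) ≫
          (α_ (D.bang.obj A) (D.bang.obj B) B).hom ≫
          (D.bang.obj A ◁ D.deriv B) +
        (D.seely A B ⊗ₘ D.pr1 A B) ≫
          (α_ (D.bang.obj A) (D.bang.obj B) A).hom ≫
          (D.bang.obj A ◁ (β_ (D.bang.obj B) A).hom) ≫
          (α_ (D.bang.obj A) A (D.bang.obj B)).inv ≫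
          (D.deriv A ▷ D.bang.obj B) := by
  have hm : D.deriv (D.biprod A B) ≫ D.seely A B =
      (D.deriv (D.biprod A B) ≫ D.conn (D.biprod A B)) ≫
        (D.bang.map (D.pr1 A B) ⊗ₘ D.bang.map (D.pr2 A B)) := by
    rw [DSC.seely, Category.assoc]
  rw [hm, D.deriv_conn, D.add_comp]
  congr 1
  · -- first summand
    calc ((D.conn (D.biprod A B) ▷ D.biprod A B) ≫
          (α_ _ _ _).hom ≫ (D.bang.obj (D.biprod A B) ◁ D.deriv (D.biprod A B))) ≫
          (D.bang.map (D.pr1 A B) ⊗ₘ D.bang.map (D.pr2 A B))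
        = (D.conn (D.biprod A B) ▷ D.biprod A B) ≫ (α_ _ _ _).hom ≫
            (D.bang.map (D.pr1 A B) ⊗ₘ (D.deriv (D.biprod A B) ≫ D.bang.map (D.pr2 A B))) := by
          simp only [Category.assoc, ← MonoidalCategory.id_tensorHom,
            MonoidalCategory.tensorHom_comp_tensorHom, Category.id_comp]
      _ = (D.conn (D.biprod A B) ▷ D.biprod A B) ≫ (α_ _ _ _).hom ≫
            (D.bang.map (D.pr1 A B) ⊗ₘ (D.bang.map (D.pr2 A B) ⊗ₘ D.pr2 A B)) ≫
              (𝟙 (D.bang.obj A) ⊗ₘ D.deriv B) := by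
          rw [← D.deriv_natural (D.pr2 A B)]
          conv_lhs => rw [← Category.comp_id (D.bang.map (D.pr1 A B)),
            ← MonoidalCategory.tensorHom_comp_tensorHom]
      _ = (D.seely A B ⊗ₘ D.pr2 A B) ≫ (α_ _ _ _).hom ≫ (D.bang.obj A ◁ D.deriv B) := by
          rw [DSC.seely, ← MonoidalCategory.associator_naturality_assoc,
            ← MonoidalCategory.tensorHom_id, MonoidalCategory.tensorHom_comp_tensorHom_assoc,
            Category.id_comp, MonoidalCategory.id_tensorHom]
  · -- second summand
    calc ((D.conn (D.biprod A B) ▷ D.biprod A B) ≫ (α_ _ _ _).hom ≫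
          (D.bang.obj (D.biprod A B) ◁ (β_ (D.bang.obj (D.biprod A B)) (D.biprod A B)).hom) ≫
          (α_ _ _ _).inv ≫ (D.deriv (D.biprod A B) ▷ D.bang.obj (D.biprod A B))) ≫
          (D.bang.map (D.pr1 A B) ⊗ₘ D.bang.map (D.pr2 A B))
        = (D.conn (D.biprod A B) ▷ D.biprod A B) ≫ (α_ _ _ _).hom ≫
            (D.bang.obj (D.biprod A B) ◁ (β_ (D.bang.obj (D.biprod A B)) (D.biprod A B)).hom) ≫
            (α_ _ _ _).inv ≫
            ((D.deriv (D.biprod A B) ≫ D.bang.map (D.pr1 A B)) ⊗ₘ D.bang.map (D.pr2 A B)) := by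
          simp only [Category.assoc, ← MonoidalCategory.tensorHom_id,
            MonoidalCategory.tensorHom_comp_tensorHom, Category.id_comp]
      _ = (D.conn (D.biprod A B) ▷ D.biprod A B) ≫ (α_ _ _ _).hom ≫
            (D.bang.obj (D.biprod A B) ◁ (β_ (D.bang.obj (D.biprod A B)) (D.biprod A B)).hom) ≫
            (α_ _ _ _).inv ≫
            ((D.bang.map (D.pr1 A B) ⊗ₘ D.pr1 A B) ⊗ₘ D.bang.map (D.pr2 A B)) ≫
              (D.deriv A ⊗ₘ 𝟙 (D.bang.obj B)) := by
          rw [← D.deriv_natural (D.pr1 A B)]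
          conv_lhs => rw [← Category.comp_id (D.bang.map (D.pr2 A B)),
            ← MonoidalCategory.tensorHom_comp_tensorHom]
      _ = (D.conn (D.biprod A B) ▷ D.biprod A B) ≫ (α_ _ _ _).hom ≫
            (D.bang.obj (D.biprod A B) ◁ (β_ (D.bang.obj (D.biprod A B)) (D.biprod A B)).hom) ≫
            (D.bang.map (D.pr1 A B) ⊗ₘ (D.pr1 A B ⊗ₘ D.bang.map (D.pr2 A B))) ≫
            (α_ _ _ _).inv ≫ (D.deriv A ⊗ₘ 𝟙 (D.bang.obj B)) := by
          rw [← MonoidalCategory.associator_inv_naturality_assoc]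
      _ = (D.conn (D.biprod A B) ▷ D.biprod A B) ≫ (α_ _ _ _).hom ≫
            (D.bang.map (D.pr1 A B) ⊗ₘ
              ((β_ (D.bang.obj (D.biprod A B)) (D.biprod A B)).hom ≫
                (D.pr1 A B ⊗ₘ D.bang.map (D.pr2 A B)))) ≫
            (α_ _ _ _).inv ≫ (D.deriv A ⊗ₘ 𝟙 (D.bang.obj B)) := by
          rw [← MonoidalCategory.id_tensorHom, MonoidalCategory.tensorHom_comp_tensorHom_assoc,
            Category.id_comp]
      _ = (D.conn (D.biprod A B) ▷ D.biprod A B) ≫ (α_ _ _ _).hom ≫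
            (D.bang.map (D.pr1 A B) ⊗ₘ
              ((D.bang.map (D.pr2 A B) ⊗ₘ D.pr1 A B) ≫ (β_ (D.bang.obj B) A).hom)) ≫
            (α_ _ _ _).inv ≫ (D.deriv A ⊗ₘ 𝟙 (D.bang.obj B)) := by
          rw [← BraidedCategory.braiding_naturality]
      _ = (D.conn (D.biprod A B) ▷ D.biprod A B) ≫ (α_ _ _ _).hom ≫
            (D.bang.map (D.pr1 A B) ⊗ₘ (D.bang.map (D.pr2 A B) ⊗ₘ D.pr1 A B)) ≫
            (𝟙 (D.bang.obj A) ⊗ₘ (β_ (D.bang.obj B) A).hom) ≫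
            (α_ _ _ _).inv ≫ (D.deriv A ⊗ₘ 𝟙 (D.bang.obj B)) := by
          rw [MonoidalCategory.tensorHom_comp_tensorHom_assoc, Category.comp_id]
      _ = (D.seely A B ⊗ₘ D.pr1 A B) ≫ (α_ _ _ _).hom ≫
            (D.bang.obj A ◁ (β_ (D.bang.obj B) A).hom) ≫ (α_ _ _ _).inv ≫
            (D.deriv A ▷ D.bang.obj B) := by
          rw [DSC.seely, ← MonoidalCategory.associator_naturality_assoc,
            ← MonoidalCategory.tensorHom_id, MonoidalCategory.tensorHom_comp_tensorHom_assoc,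
            Category.id_comp, MonoidalCategory.id_tensorHom,
            MonoidalCategory.tensorHom_id]
end

section
/- In a differential Seely category, for all objects A, B: (id_{!(A⊕B)} ⊗ ι_2); ∂_{A⊕B}; s_{A,B}; (id_{!A} ⊗ d_B) = !π_1 ⊗ id_B as morphisms !(A ⊕ B) ⊗ B → !A ⊗ B, where ι_2 : B → A ⊕ B is the biproduct injection. -/
/-!
STATEMENT 17: In a differential Seely category, for all objects `A, B`:
`(id_{!(A⊕B)} ⊗ ι₂) ≫ ∂_{A⊕B} ≫ s_{A,B} ≫ (id_{!A} ⊗ d_B) = !π₁ ⊗ id_B` as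
morphisms `!(A ⊕ B) ⊗ B ⟶ !A ⊗ B`, where `ι₂ : B ⟶ A ⊕ B` is the biproduct
injection.
-/

open CategoryTheory MonoidalCategory

universe v u

namespace DSC

variable {L : Type u} [Category.{v} L] [MonoidalCategory L] [SymmetricCategory L]
  [∀ X Y : L, AddCommMonoid (X ⟶ Y)] (D : DSC L)

/-! ### Auxiliary lemmas -/

lemma in2_deriv_pr1 (A B : L) :
    (D.bang.obj (D.biprod A B) ◁ D.in2 A B) ≫ D.deriv (D.biprod A B) ≫
      D.bang.map (D.pr1 A B) = 0 := by
  rw [← D.deriv_natural (D.pr1 A B), MonoidalCategory.tensorHom_def]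
  simp only [Category.assoc]
  rw [whisker_exchange_assoc, ← MonoidalCategory.whiskerLeft_comp_assoc, D.in2_pr1,
    D.whiskerLeft_zero, D.zero_comp', D.comp_zero']

lemma in2_deriv_der_pr2 (A B : L) :
    (D.bang.obj (D.biprod A B) ◁ D.in2 A B) ≫ D.deriv (D.biprod A B) ≫
      D.der (D.biprod A B) ≫ D.pr2 A B =
    (D.weakn (D.biprod A B) ▷ B) ≫ (λ_ B).hom := by
  slice_lhs 2 3 => rw [D.deriv_der]
  simp only [Category.assoc]
  rw [whisker_exchange_assoc, MonoidalCategory.leftUnitor_naturality_assoc, D.in2_pr2,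
    Category.comp_id]

lemma conn_weakn_rho (X : L) :
    D.conn X ≫ (D.bang.obj X ◁ D.weakn X) ≫ (ρ_ (D.bang.obj X)).hom =
      𝟙 (D.bang.obj X) := by
  conv_lhs => rw [← D.conn_cocomm X]
  rw [Category.assoc, ← BraidedCategory.braiding_naturality_left_assoc,
    braiding_rightUnitor]
  exact D.conn_counit X

lemma conn_pr1_weakn (A B : L) :
    D.conn (D.biprod A B) ≫ (D.bang.map (D.pr1 A B) ▷ D.bang.obj (D.biprod A B)) ≫
      (D.bang.obj A ◁ D.weakn (D.biprod A B)) ≫ (ρ_ (D.bang.obj A)).hom =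
    D.bang.map (D.pr1 A B) := by
  rw [← whisker_exchange_assoc, MonoidalCategory.rightUnitor_naturality]
  slice_lhs 1 3 => rw [D.conn_weakn_rho]
  simp

lemma term1_eq (A B : L) :
    (D.bang.obj (D.biprod A B) ◁ D.in2 A B) ≫
      (D.conn (D.biprod A B) ▷ D.biprod A B) ≫
      (α_ (D.bang.obj (D.biprod A B)) (D.bang.obj (D.biprod A B)) (D.biprod A B)).hom ≫
      (D.bang.obj (D.biprod A B) ◁ D.deriv (D.biprod A B)) ≫
      (D.bang.map (D.pr1 A B) ▷ D.bang.obj (D.biprod A B)) ≫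
      (D.bang.obj A ◁ D.der (D.biprod A B)) ≫ (D.bang.obj A ◁ D.pr2 A B) =
    D.bang.map (D.pr1 A B) ▷ B := by
  rw [whisker_exchange_assoc, associator_naturality_right_assoc,
    ← MonoidalCategory.whiskerLeft_comp_assoc, whisker_exchange_assoc,
    ← MonoidalCategory.whiskerLeft_comp_assoc, ← MonoidalCategory.whiskerLeft_comp]
  simp only [Category.assoc]
  rw [D.in2_deriv_der_pr2, ← associator_naturality_left_assoc,
    MonoidalCategory.whiskerLeft_comp, ← associator_naturality_middle_assoc,
    MonoidalCategory.triangle, ← comp_whiskerRight_assoc, ← comp_whiskerRight_assoc,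
    ← comp_whiskerRight]
  congr 1
  simp only [Category.assoc]
  exact D.conn_pr1_weakn A B

lemma term2_eq (A B : L) :
    (D.bang.obj (D.biprod A B) ◁ D.in2 A B) ≫
      (D.conn (D.biprod A B) ▷ D.biprod A B) ≫
      (α_ (D.bang.obj (D.biprod A B)) (D.bang.obj (D.biprod A B)) (D.biprod A B)).hom ≫
      (D.bang.obj (D.biprod A B) ◁ (β_ (D.bang.obj (D.biprod A B)) (D.biprod A B)).hom) ≫
      (α_ (D.bang.obj (D.biprod A B)) (D.biprod A B) (D.bang.obj (D.biprod A B))).inv ≫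
      (D.deriv (D.biprod A B) ▷ D.bang.obj (D.biprod A B)) ≫
      (D.bang.map (D.pr1 A B) ▷ D.bang.obj (D.biprod A B)) ≫
      (D.bang.obj A ◁ D.der (D.biprod A B)) ≫ (D.bang.obj A ◁ D.pr2 A B) =
    0 := by
  rw [whisker_exchange_assoc, associator_naturality_right_assoc,
    ← MonoidalCategory.whiskerLeft_comp_assoc,
    BraidedCategory.braiding_naturality_right,
    MonoidalCategory.whiskerLeft_comp_assoc, associator_inv_naturality_middle_assoc,
    ← comp_whiskerRight_assoc, ← comp_whiskerRight_assoc]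
  have h : ((D.bang.obj (D.biprod A B) ◁ D.in2 A B) ≫ D.deriv (D.biprod A B)) ≫
      D.bang.map (D.pr1 A B) = 0 := by
    rw [Category.assoc]; exact D.in2_deriv_pr1 A B
  rw [h, D.whiskerRight_zero]
  simp only [D.zero_comp', D.comp_zero']

end DSC

/-- the partial differential of a map linear in its second argument
recovers the map itself. -/
theorem DSC.deriv_seely_der {L : Type u} [Category.{v} L] [MonoidalCategory L]
    [SymmetricCategory L] [∀ X Y : L, AddCommMonoid (X ⟶ Y)] (D : DSC L) (A B : L) :
    (D.bang.obj (D.biprod A B) ◁ D.in2 A B) ≫ D.deriv (D.biprod A B) ≫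
        D.seely A B ≫ (D.bang.obj A ◁ D.der B) =
      (D.bang.map (D.pr1 A B) ⊗ₘ 𝟙 B) := by
  rw [tensorHom_id]
  simp only [DSC.seely, MonoidalCategory.tensorHom_def, Category.assoc]
  rw [← MonoidalCategory.whiskerLeft_comp, D.der_natural,
    MonoidalCategory.whiskerLeft_comp]
  slice_lhs 2 3 => rw [D.deriv_conn]
  simp only [D.add_comp, D.comp_add, Category.assoc]
  rw [D.term1_eq A B, D.term2_eq A B, add_zero]
end

section
/- Let L be a differential Seely category with Kleisli category L_!. Define T : L_! → LS(L_!) by T(A) = (A, A) on objects and T(f) = (f, ∂_A; f) on Kleisli morphisms f : !A → B. Then T is a functor: T(id) = id and T(f; g) = T(f); T(g), where composition in L_! of f : !A → B and g : !B → C is p_A; !f; g. -/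
/-!
STATEMENT 18: Let `L` be a differential Seely category with Kleisli category `L_!`.
Define `T : L_! → LS(L_!)` by `T(A) = (A, A)` on objects and `T(f) = (f, ∂_A ≫ f)` on
Kleisli morphisms `f : !A ⟶ B`. Then `T` is a functor: `T(id) = id` and
`T(f ; g) = T(f) ; T(g)`, where composition in `L_!` of `f : !A ⟶ B` and `g : !B ⟶ C`
is `p_A ≫ !f ≫ g`.
-/

open CategoryTheory MonoidalCategory

universe v u

namespace DSC

variable {L : Type u} [Category.{v} L] [MonoidalCategory L] [SymmetricCategory L]
  [∀ X Y : L, AddCommMonoid (X ⟶ Y)] (D : DSC L)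

/-- Composition in the Kleisli category `L_!`: `f ; g = p_A ≫ !f ≫ g`. -/
def kcomp {A B E : L} (f : D.bang.obj A ⟶ B) (g : D.bang.obj B ⟶ E) :
    D.bang.obj A ⟶ E :=
  D.dig A ≫ D.bang.map f ≫ g

/-- Identities in the Kleisli category `L_!` are the derelictions. -/
def kid (A : L) : D.bang.obj A ⟶ A := D.der A

/-- Morphisms of the linear simple category `LS(L_!)` of the Kleisli adjunction:
a morphism `(A, B) ⟶ (A', B')` is a pair of `f : !A ⟶ A'` (a Kleisli morphism) and
`u : !A ⊗ B ⟶ B'`. -/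
structure KLSHom (P Q : L × L) where
  base : D.bang.obj P.1 ⟶ Q.1
  fib : D.bang.obj P.1 ⊗ P.2 ⟶ Q.2

/-- Composition in `LS(L_!)`:
`(f,u) ; (g,v) = (f ;_! g, (c ⊗ id) ≫ (F(f) ⊗ u) ≫ v)` where `F(f) = p ≫ !f` is the
action of the left adjoint of the Kleisli adjunction. -/
def KLSHom.comp {P Q R : L × L} (k : KLSHom D P Q) (l : KLSHom D Q R) :
    KLSHom D P R where
  base := D.kcomp k.base l.base
  fib := (D.conn P.1 ▷ P.2) ≫ (α_ (D.bang.obj P.1) (D.bang.obj P.1) P.2).hom ≫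
    ((D.dig P.1 ≫ D.bang.map k.base) ⊗ₘ k.fib) ≫ l.fib

/-- Identities in `LS(L_!)`: `(d_A, w_A ⊗ id_B)`. -/
def KLSHom.id (P : L × L) : KLSHom D P P where
  base := D.kid P.1
  fib := (D.weakn P.1 ▷ P.2) ≫ (λ_ P.2).hom

/-- The linear tangent functor `T` on objects: `T(A) = (A, A)`. -/
def TObj (A : L) : L × L := (A, A)

/-- The linear tangent functor `T` on Kleisli morphisms: `T(f) = (f, ∂_A ≫ f)`. -/
def TMap {A B : L} (f : D.bang.obj A ⟶ B) : KLSHom D (TObj A) (TObj B) where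
  base := f
  fib := D.deriv A ≫ f

/-- `T` is a functor from the Kleisli category `L_!` to the linear
simple category `LS(L_!)`: it preserves identities and composition. -/
theorem T_functor (A : L) {B E : L}
    (f : D.bang.obj A ⟶ B) (g : D.bang.obj B ⟶ E) :
    D.TMap (D.kid A) = KLSHom.id D (TObj A) ∧
    D.TMap (D.kcomp f g) = KLSHom.comp D (D.TMap f) (D.TMap g) := by
  constructor
  · simp only [TMap, KLSHom.id, kid]
    congr 1
    exact D.deriv_der A
  · simp only [TMap, KLSHom.comp, kcomp]
    congr 1
    have h1 := D.deriv_dig A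
    have h2 := D.deriv_natural f
    calc D.deriv A ≫ D.dig A ≫ D.bang.map f ≫ g
        = (D.deriv A ≫ D.dig A) ≫ D.bang.map f ≫ g := by simp
      _ = ((D.conn A ▷ A) ≫ (α_ (D.bang.obj A) (D.bang.obj A) A).hom ≫
            (D.dig A ⊗ₘ D.deriv A) ≫ D.deriv (D.bang.obj A)) ≫ D.bang.map f ≫ g := by
            rw [h1]
      _ = (D.conn A ▷ A) ≫ (α_ (D.bang.obj A) (D.bang.obj A) A).hom ≫
            (D.dig A ⊗ₘ D.deriv A) ≫ (D.deriv (D.bang.obj A) ≫ D.bang.map f) ≫ g := by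
            simp
      _ = (D.conn A ▷ A) ≫ (α_ (D.bang.obj A) (D.bang.obj A) A).hom ≫
            (D.dig A ⊗ₘ D.deriv A) ≫ ((D.bang.map f ⊗ₘ f) ≫ D.deriv B) ≫ g := by
            rw [h2]
      _ = (D.conn A ▷ A) ≫ (α_ (D.bang.obj A) (D.bang.obj A) A).hom ≫
            ((D.dig A ≫ D.bang.map f) ⊗ₘ (D.deriv A ≫ f)) ≫ D.deriv B ≫ g := by
            simp [tensorHom_comp_tensorHom]

end DSC
end
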